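/- Let g(x) = p·φ(x − a) + (1−p)·φ(x + a) with φ the standard normal density, p ∈ (0,1), a > 0, and let G be its CDF. Let Φ_m be the CDF of a normal distribution matching the mean and variance of g, i.e. mean μ = (2p−1)a and variance 1 + 4p(1−p)a². Then sup_x |G(x) − Φ_m(x)| = O(a³) as a → 0⁺, uniformly in p. -/

import Mathlib

/-!
Put `u = x - (2p - 1)a` and `e = 4p(1 - p)a²`. The mixture puts weights `p, 1 - p` on the shifts
`-2(1 - p)a, 2pa` of `u`, which have mean `0` and second moment `e`, so by second-order Taylor
expansion of `Φ` at `u` the mixture CDF is `Φ(u) - (e/2) u φ(u) + O(a³)`. A first-order expansion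
of `s ↦ Φ(u / √(1 + s))` at `s = 0` gives the same two terms up to `O(e²) = O(a⁴)`. All remainders
are uniform in `u` because `|t|ⁿ φ(t) ≤ n!`.
-/

open MeasureTheory Set

/-- The standard normal cumulative distribution function. -/
noncomputable def stdNormalCDF (x : ℝ) : ℝ :=
  ∫ t in Set.Iic x, Real.exp (-t ^ 2 / 2) / Real.sqrt (2 * Real.pi)

open Real
open scoped Nat

noncomputable def stdNormalPDF (t : ℝ) : ℝ := exp (-t ^ 2 / 2) / √(2 * π)

lemma stdNormalPDF_nonneg (t : ℝ) : 0 ≤ stdNormalPDF t := by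
  unfold stdNormalPDF; positivity

lemma continuous_stdNormalPDF : Continuous stdNormalPDF := by
  unfold stdNormalPDF; fun_prop

lemma integrable_stdNormalPDF : Integrable stdNormalPDF := by
  have h : stdNormalPDF = fun t => exp (-(1 / 2) * t ^ 2) / √(2 * π) := by
    funext t; unfold stdNormalPDF; ring_nf
  rw [h]
  exact (integrable_exp_neg_mul_sq (by norm_num)).div_const _

lemma hasDerivAt_integral_Iic {f : ℝ → ℝ} (hf : Continuous f) (hfi : Integrable f) (x : ℝ) :
    HasDerivAt (fun y => ∫ t in Iic y, f t) (f x) x := by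
  have h : (fun y => ∫ t in Iic y, f t) = fun y => (∫ t in Iic 0, f t) + ∫ t in 0..y, f t := by
    funext y
    rw [← intervalIntegral.integral_Iic_sub_Iic hfi.integrableOn hfi.integrableOn]
    ring
  rw [h]
  exact (intervalIntegral.integral_hasDerivAt_right hfi.intervalIntegrable
    hf.aestronglyMeasurable.stronglyMeasurableAtFilter hf.continuousAt).const_add _

lemma hasDerivAt_stdNormalCDF (x : ℝ) : HasDerivAt stdNormalCDF (stdNormalPDF x) x :=
  hasDerivAt_integral_Iic continuous_stdNormalPDF integrable_stdNormalPDF x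

lemma hasDerivAt_stdNormalPDF (t : ℝ) : HasDerivAt stdNormalPDF (-t * stdNormalPDF t) t := by
  have h := ((((hasDerivAt_pow 2 t).fun_neg).div_const 2).exp).div_const (√(2 * π))
  exact h.congr_deriv (by unfold stdNormalPDF; push_cast; ring)

lemma hasDerivAt_neg_mul_stdNormalPDF (t : ℝ) :
    HasDerivAt (fun t => -t * stdNormalPDF t) ((t ^ 2 - 1) * stdNormalPDF t) t :=
  ((hasDerivAt_neg t).mul (hasDerivAt_stdNormalPDF t)).congr_deriv (by ring)

lemma abs_pow_mul_exp_neg_sq_div_two_le (n : ℕ) (t : ℝ) :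
    |t| ^ n * exp (-t ^ 2 / 2) ≤ 2 * n ! := by
  have hpow : |t| ^ n ≤ n ! * exp |t| := by
    have := pow_div_factorial_le_exp _ (abs_nonneg t) n
    rwa [div_le_iff₀ (by positivity), mul_comm] at this
  have hexp : exp |t| * exp (-t ^ 2 / 2) ≤ 2 := by
    rw [← exp_add]
    refine (exp_le_exp.2 ?_).trans_eq (exp_log two_pos)
    nlinarith [sq_abs t, sq_nonneg (|t| - 1), log_two_gt_d9]
  calc |t| ^ n * exp (-t ^ 2 / 2) ≤ n ! * exp |t| * exp (-t ^ 2 / 2) := by gcongr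
    _ = n ! * (exp |t| * exp (-t ^ 2 / 2)) := by ring
    _ ≤ n ! * 2 := by gcongr
    _ = 2 * n ! := by ring

lemma abs_pow_mul_stdNormalPDF_le (n : ℕ) (t : ℝ) : |t| ^ n * stdNormalPDF t ≤ n ! := by
  have hsqrt : 2 ≤ √(2 * π) := (Real.le_sqrt' two_pos).2 (by nlinarith [pi_gt_three])
  unfold stdNormalPDF
  rw [mul_div_assoc', div_le_iff₀ (by positivity)]
  nlinarith [abs_pow_mul_exp_neg_sq_div_two_le n t, (Nat.cast_nonneg n ! : (0 : ℝ) ≤ n !)]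

lemma abs_sq_sub_one_mul_stdNormalPDF_le (t : ℝ) : |(t ^ 2 - 1) * stdNormalPDF t| ≤ 3 := by
  have h0 := abs_pow_mul_stdNormalPDF_le 0 t
  have h2 := abs_pow_mul_stdNormalPDF_le 2 t
  have hφ := stdNormalPDF_nonneg t
  rw [abs_mul, abs_of_nonneg hφ]
  calc |t ^ 2 - 1| * stdNormalPDF t ≤ (t ^ 2 + 1) * stdNormalPDF t := by
        gcongr
        exact (abs_sub _ _).trans (by rw [abs_one, abs_sq])
    _ ≤ 3 := by norm_num at h0 h2; linarith

lemma abs_three_mul_sub_cube_mul_stdNormalPDF_le (t : ℝ) :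
    |(3 * t - t ^ 3) * stdNormalPDF t| ≤ 9 := by
  have h1 := abs_pow_mul_stdNormalPDF_le 1 t
  have h3 := abs_pow_mul_stdNormalPDF_le 3 t
  have hφ := stdNormalPDF_nonneg t
  rw [abs_mul, abs_of_nonneg hφ]
  calc |3 * t - t ^ 3| * stdNormalPDF t ≤ (3 * |t| + |t| ^ 3) * stdNormalPDF t := by
        gcongr
        exact (abs_sub _ _).trans (by rw [abs_mul, abs_pow, abs_of_pos three_pos])
    _ ≤ 9 := by norm_num [Nat.factorial] at h1 h3; linarith

section Taylor

variable {s : Set ℝ} {f f' f'' f''' : ℝ → ℝ} {x y : ℝ}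

lemma Convex.abs_taylor_remainder_one_le (hs : Convex ℝ s)
    (hf : ∀ t ∈ s, HasDerivWithinAt f (f' t) s t) (hf' : ∀ t ∈ s, HasDerivWithinAt f' (f'' t) s t)
    {K : ℝ} (hK : ∀ t ∈ s, |f'' t| ≤ K) (hx : x ∈ s) (hy : y ∈ s) :
    |f y - f x - f' x * (y - x)| ≤ K * |y - x| ^ 2 := by
  have hIs : uIcc x y ⊆ s := by rw [← segment_eq_uIcc]; exact hs.segment_subset hx hy
  have hK0 : 0 ≤ K := (abs_nonneg _).trans (hK x hx)
  have hf'_lip : ∀ t ∈ uIcc x y, |f' t - f' x| ≤ K * |y - x| := by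
    intro t ht
    have := (convex_uIcc x y).norm_image_sub_le_of_norm_hasDerivWithin_le
      (fun z hz => (hf' z (hIs hz)).mono hIs) (fun z hz => hK z (hIs hz)) left_mem_uIcc ht
    exact this.trans (by gcongr; exact abs_sub_left_of_mem_uIcc ht)
  have hg : ∀ t ∈ uIcc x y,
      HasDerivWithinAt (fun z => f z - f' x * z) (f' t - f' x) (uIcc x y) t := fun t ht =>
    ((hf t (hIs ht)).mono hIs).sub (((hasDerivAt_id t).const_mul (f' x)).hasDerivWithinAt)
      |>.congr_deriv (by ring)
  have := (convex_uIcc x y).norm_image_sub_le_of_norm_hasDerivWithin_le hg hf'_lip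
    left_mem_uIcc right_mem_uIcc
  simp only [Real.norm_eq_abs] at this
  calc |f y - f x - f' x * (y - x)| = |f y - f' x * y - (f x - f' x * x)| := by ring_nf
    _ ≤ K * |y - x| * |y - x| := this
    _ = K * |y - x| ^ 2 := by ring

lemma Convex.abs_taylor_remainder_two_le (hs : Convex ℝ s)
    (hf : ∀ t ∈ s, HasDerivWithinAt f (f' t) s t) (hf' : ∀ t ∈ s, HasDerivWithinAt f' (f'' t) s t)
    (hf'' : ∀ t ∈ s, HasDerivWithinAt f'' (f''' t) s t)
    {M : ℝ} (hM : ∀ t ∈ s, |f''' t| ≤ M) (hx : x ∈ s) (hy : y ∈ s) :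
    |f y - f x - f' x * (y - x) - f'' x * (y - x) ^ 2 / 2| ≤ M * |y - x| ^ 3 := by
  have hIs : uIcc x y ⊆ s := by rw [← segment_eq_uIcc]; exact hs.segment_subset hx hy
  have hf'_taylor : ∀ t ∈ uIcc x y, |f' t - f' x - f'' x * (t - x)| ≤ M * |y - x| ^ 2 := by
    intro t ht
    have hM0 : 0 ≤ M := (abs_nonneg _).trans (hM x hx)
    refine (hs.abs_taylor_remainder_one_le hf' hf'' hM hx (hIs ht)).trans ?_
    exact mul_le_mul_of_nonneg_left
      (pow_le_pow_left₀ (abs_nonneg _) (abs_sub_left_of_mem_uIcc ht) 2) hM0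
  have hg : ∀ t ∈ uIcc x y, HasDerivWithinAt (fun z => f z - f' x * z - f'' x * (z - x) ^ 2 / 2)
      (f' t - f' x - f'' x * (t - x)) (uIcc x y) t := by
    intro t ht
    have hq : HasDerivAt (fun z => f'' x * (z - x) ^ 2 / 2) (f'' x * (t - x)) t :=
      ((((hasDerivAt_id t).sub_const x).pow 2).const_mul (f'' x)).div_const 2
        |>.congr_deriv (by simp; ring)
    exact (((hf t (hIs ht)).mono hIs).sub
      ((hasDerivAt_id t).const_mul (f' x)).hasDerivWithinAt).sub hq.hasDerivWithinAt
      |>.congr_deriv (by ring)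
  have := (convex_uIcc x y).norm_image_sub_le_of_norm_hasDerivWithin_le hg hf'_taylor
    left_mem_uIcc right_mem_uIcc
  simp only [Real.norm_eq_abs] at this
  calc |f y - f x - f' x * (y - x) - f'' x * (y - x) ^ 2 / 2|
      = |f y - f' x * y - f'' x * (y - x) ^ 2 / 2 - (f x - f' x * x - f'' x * (x - x) ^ 2 / 2)| := by
        ring_nf
    _ ≤ M * |y - x| ^ 2 * |y - x| := this
    _ = M * |y - x| ^ 3 := by ring

end Taylor

lemma abs_two_point_mean_sub_taylor_le {f f' f'' f''' : ℝ → ℝ}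
    (hf : ∀ t, HasDerivAt f (f' t) t) (hf' : ∀ t, HasDerivAt f' (f'' t) t)
    (hf'' : ∀ t, HasDerivAt f'' (f''' t) t) {M : ℝ} (hM : ∀ t, |f''' t| ≤ M)
    {p : ℝ} (hp : p ∈ Icc 0 1) {h₁ h₂ : ℝ} (hmean : p * h₁ + (1 - p) * h₂ = 0) (u : ℝ) :
    |p * f (u + h₁) + (1 - p) * f (u + h₂) - (f u + (p * h₁ ^ 2 + (1 - p) * h₂ ^ 2) / 2 * f'' u)|
      ≤ M * (p * |h₁| ^ 3 + (1 - p) * |h₂| ^ 3) := by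
  have taylor (h : ℝ) :
      |f (u + h) - f u - f' u * h - f'' u * h ^ 2 / 2| ≤ M * |h| ^ 3 := by
    simpa using convex_univ.abs_taylor_remainder_two_le (fun t _ => (hf t).hasDerivWithinAt)
      (fun t _ => (hf' t).hasDerivWithinAt) (fun t _ => (hf'' t).hasDerivWithinAt)
      (fun t _ => hM t) (mem_univ u) (mem_univ (u + h))
  have hp₀ : 0 ≤ p := hp.1
  have hp₁ : 0 ≤ 1 - p := sub_nonneg.2 hp.2
  calc _ = |p * (f (u + h₁) - f u - f' u * h₁ - f'' u * h₁ ^ 2 / 2)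
          + (1 - p) * (f (u + h₂) - f u - f' u * h₂ - f'' u * h₂ ^ 2 / 2)| := by
        congr 1; linear_combination f' u * hmean
    _ ≤ p * (M * |h₁| ^ 3) + (1 - p) * (M * |h₂| ^ 3) := by
        refine (abs_add_le _ _).trans ?_
        rw [abs_mul, abs_mul, abs_of_nonneg hp₀, abs_of_nonneg hp₁]
        gcongr <;> exact taylor _
    _ = M * (p * |h₁| ^ 3 + (1 - p) * |h₂| ^ 3) := by ring

lemma hasDerivAt_div_sqrt_one_add (u : ℝ) {s : ℝ} (hs : 0 < 1 + s) :
    HasDerivAt (fun s => u / √(1 + s)) (-(u / √(1 + s)) / (2 * (1 + s))) s := by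
  have hsqrt := ((hasDerivAt_id' s).const_add 1).sqrt hs.ne'
  have hne : √(1 + s) ≠ 0 := (sqrt_pos.2 hs).ne'
  refine ((hasDerivAt_const s u).div hsqrt hne).congr_deriv ?_
  field_simp
  rw [sq_sqrt hs.le]
  ring

lemma hasDerivAt_stdNormalCDF_div_sqrt_one_add (u : ℝ) {s : ℝ} (hs : 0 < 1 + s) :
    HasDerivAt (fun s => stdNormalCDF (u / √(1 + s)))
      (-(u / √(1 + s)) * stdNormalPDF (u / √(1 + s)) / (2 * (1 + s))) s :=
  ((hasDerivAt_stdNormalCDF _).comp s (hasDerivAt_div_sqrt_one_add u hs)).congr_deriv (by ring)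

lemma hasDerivAt_deriv_stdNormalCDF_div_sqrt_one_add (u : ℝ) {s : ℝ} (hs : 0 < 1 + s) :
    HasDerivAt (fun s => -(u / √(1 + s)) * stdNormalPDF (u / √(1 + s)) / (2 * (1 + s)))
      ((3 * (u / √(1 + s)) - (u / √(1 + s)) ^ 3) * stdNormalPDF (u / √(1 + s))
        / (4 * (1 + s) ^ 2)) s := by
  have hnum : HasDerivAt (fun s => -(u / √(1 + s)) * stdNormalPDF (u / √(1 + s)))
      (((u / √(1 + s)) ^ 2 - 1) * stdNormalPDF (u / √(1 + s)) * (-(u / √(1 + s)) / (2 * (1 + s))))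
      s :=
    (hasDerivAt_neg_mul_stdNormalPDF _).comp s (hasDerivAt_div_sqrt_one_add u hs)
  have hden := ((hasDerivAt_id' s).const_add 1).const_mul 2
  refine (hnum.div hden (by positivity)).congr_deriv ?_
  generalize u / √(1 + s) = w
  field_simp
  ring

lemma abs_stdNormalCDF_div_sqrt_one_add_sub_le (u : ℝ) {e : ℝ} (he : 0 ≤ e) :
    |stdNormalCDF (u / √(1 + e)) - (stdNormalCDF u + e / 2 * (-u * stdNormalPDF u))|
      ≤ 9 / 4 * e ^ 2 := by
  have hpos : ∀ t ∈ Ici (0 : ℝ), 0 < 1 + t := fun t ht => by simp only [mem_Ici] at ht; linarith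
  have hbound : ∀ t ∈ Ici (0 : ℝ), |(3 * (u / √(1 + t)) - (u / √(1 + t)) ^ 3)
      * stdNormalPDF (u / √(1 + t)) / (4 * (1 + t) ^ 2)| ≤ 9 / 4 := by
    intro t ht
    have h1 : 1 ≤ (1 + t) ^ 2 := by simp only [mem_Ici] at ht; nlinarith
    have h4 : 0 < 4 * (1 + t) ^ 2 := by positivity
    rw [abs_div, abs_of_pos h4, div_le_iff₀ h4]
    nlinarith [abs_three_mul_sub_cube_mul_stdNormalPDF_le (u / √(1 + t))]
  have := (convex_Ici 0).abs_taylor_remainder_one_le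
    (fun t ht => (hasDerivAt_stdNormalCDF_div_sqrt_one_add u (hpos t ht)).hasDerivWithinAt)
    (fun t ht => (hasDerivAt_deriv_stdNormalCDF_div_sqrt_one_add u (hpos t ht)).hasDerivWithinAt)
    hbound (mem_Ici.2 le_rfl) he
  simp only [add_zero, sqrt_one, div_one, mul_one, sub_zero, abs_of_nonneg he] at this
  calc _ = |stdNormalCDF (u / √(1 + e)) - stdNormalCDF u - -u * stdNormalPDF u / 2 * e| := by
        congr 1; ring
    _ ≤ 9 / 4 * e ^ 2 := this

lemma abs_mixture_stdNormalCDF_sub_le {p : ℝ} (hp : p ∈ Icc 0 1) {a : ℝ} (ha : 0 ≤ a) (x : ℝ) :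
    |p * stdNormalCDF (x - a) + (1 - p) * stdNormalCDF (x + a)
      - (stdNormalCDF (x - (2 * p - 1) * a) + 4 * p * (1 - p) * a ^ 2 / 2
        * (-(x - (2 * p - 1) * a) * stdNormalPDF (x - (2 * p - 1) * a)))| ≤ 6 * a ^ 3 := by
  obtain ⟨hp₀, hp₁⟩ := hp
  have h := abs_two_point_mean_sub_taylor_le hasDerivAt_stdNormalCDF hasDerivAt_stdNormalPDF
    hasDerivAt_neg_mul_stdNormalPDF abs_sq_sub_one_mul_stdNormalPDF_le ⟨hp₀, hp₁⟩
    (h₁ := -(2 * (1 - p) * a)) (h₂ := 2 * p * a) (by ring) (x - (2 * p - 1) * a)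
  rw [show x - (2 * p - 1) * a + -(2 * (1 - p) * a) = x - a by ring,
    show x - (2 * p - 1) * a + 2 * p * a = x + a by ring,
    show (p * (-(2 * (1 - p) * a)) ^ 2 + (1 - p) * (2 * p * a) ^ 2) / 2
      = 4 * p * (1 - p) * a ^ 2 / 2 by ring,
    abs_neg, abs_of_nonneg (show 0 ≤ 2 * (1 - p) * a by nlinarith),
    abs_of_nonneg (show 0 ≤ 2 * p * a by positivity)] at h
  have hthird : p * (2 * (1 - p) * a) ^ 3 + (1 - p) * (2 * p * a) ^ 3 ≤ 2 * a ^ 3 := by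
    rw [show p * (2 * (1 - p) * a) ^ 3 + (1 - p) * (2 * p * a) ^ 3
        = 8 * (p * (1 - p)) * (1 - 2 * (p * (1 - p))) * a ^ 3 by ring]
    gcongr ?_ * _
    nlinarith [sq_nonneg (2 * p - 1), mul_nonneg hp₀ (sub_nonneg.2 hp₁)]
  linarith

theorem moment_matched_gaussian_third_order :
    ∃ C > 0, ∃ a₀ > 0, ∀ p ∈ Set.Ioo (0 : ℝ) 1, ∀ a ∈ Set.Ioo (0 : ℝ) a₀, ∀ x : ℝ,
      |p * stdNormalCDF (x - a) + (1 - p) * stdNormalCDF (x + a)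
        - stdNormalCDF ((x - (2 * p - 1) * a) / Real.sqrt (1 + 4 * p * (1 - p) * a ^ 2))|
      ≤ C * a ^ 3 := by
  refine ⟨9, by norm_num, 1, one_pos, ?_⟩
  rintro p ⟨hp₀, hp₁⟩ a ⟨ha₀, ha₁⟩ x
  set u := x - (2 * p - 1) * a
  set e := 4 * p * (1 - p) * a ^ 2
  have he₀ : 0 ≤ e := by have := mul_pos hp₀ (sub_pos.2 hp₁); positivity
  have he : e ^ 2 ≤ a ^ 3 := by
    have : e ≤ a ^ 2 := by nlinarith [sq_nonneg (2 * p - 1)]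
    nlinarith [pow_le_pow_left₀ he₀ this 2]
  have hmix := abs_mixture_stdNormalCDF_sub_le ⟨hp₀.le, hp₁.le⟩ ha₀.le x
  have hres := abs_stdNormalCDF_div_sqrt_one_add_sub_le u he₀
  rw [abs_sub_comm] at hres
  calc _ ≤ _ + _ := abs_sub_le _ (stdNormalCDF u + e / 2 * (-u * stdNormalPDF u)) _
    _ ≤ 6 * a ^ 3 + 9 / 4 * a ^ 3 := add_le_add hmix (hres.trans (by gcongr))
    _ ≤ 9 * a ^ 3 := by nlinarith
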